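/- arXiv:1503.06053 — 7 statements merged into one kernel-verified Lean document; each statement's English description precedes it below -/
import Mathlib

section
/- Let q be a nonzero complex number with q² ≠ 1. For integers 0 ≤ i ≤ l, one has x_{i,l} = q^{i+1}[i+1] + q(l−i), where x_{i,l} := ∑_{s=i+1}^{l+1} c_{l+1−s} q^s [s]. -/
/-- The `q`-integer `[s] = (q^s - q^{-s})/(q - q^{-1})`. -/
noncomputable def qInt (q : ℂ) (s : ℕ) : ℂ := (q ^ s - q⁻¹ ^ s) / (q - q⁻¹)

/-- The coefficients of the power series `(1 - q²z)/(1 - z)`: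
`c_0 = 1` and `c_m = 1 - q²` for `m ≥ 1`. -/
noncomputable def cCoeff (q : ℂ) (m : ℕ) : ℂ := if m = 0 then 1 else 1 - q ^ 2

/-- `x_{i,l} = ∑_{s=i+1}^{l+1} c_{l+1-s} q^s [s]`. -/
noncomputable def xCoeff (q : ℂ) (i l : ℕ) : ℂ :=
  ∑ s ∈ Finset.Icc (i + 1) (l + 1), cCoeff q (l + 1 - s) * q ^ s * qInt q s

lemma qsub_ne (q : ℂ) (hq : q ≠ 0) (hq2 : q ^ 2 ≠ 1) : q - q⁻¹ ≠ 0 := by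
  intro h
  apply hq2
  have : q * (q - q⁻¹) = 0 := by rw [h, mul_zero]
  rw [mul_sub, mul_inv_cancel₀ hq] at this
  have : q * q = 1 := by linear_combination this
  rw [pow_two, this]

lemma xCoeff_step (q : ℂ) (hq : q ≠ 0) (hq2 : q ^ 2 ≠ 1) (i l : ℕ) (hil : i ≤ l) :
    xCoeff q i (l + 1) = xCoeff q i l + q := by
  have h1 : i + 1 ≤ l + 1 := by omega
  have h2 : i + 1 ≤ l + 1 + 1 := by omega
  rw [xCoeff, xCoeff, Finset.sum_Icc_succ_top h2, Finset.sum_Icc_succ_top h1]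
  have e1 : ∀ s ∈ Finset.Icc (i + 1) l,
      cCoeff q (l + 1 + 1 - s) * q ^ s * qInt q s = (1 - q ^ 2) * (q ^ s * qInt q s) := by
    intro s hs
    simp only [Finset.mem_Icc] at hs
    have hns : l + 1 + 1 - s ≠ 0 := by omega
    simp [cCoeff, hns]; ring
  have e2 : ∀ s ∈ Finset.Icc (i + 1) l,
      cCoeff q (l + 1 - s) * q ^ s * qInt q s = (1 - q ^ 2) * (q ^ s * qInt q s) := by
    intro s hs
    simp only [Finset.mem_Icc] at hs
    have hns : l + 1 - s ≠ 0 := by omega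
    simp [cCoeff, hns]; ring
  rw [Finset.sum_Icc_succ_top h1, Finset.sum_congr rfl e1, Finset.sum_congr rfl e2]
  have hD : q - q⁻¹ ≠ 0 := qsub_ne q hq hq2
  have e3 : l + 1 + 1 - (l + 1) = 1 := by omega
  have e4 : l + 1 + 1 - (l + 1 + 1) = 0 := by omega
  have e5 : l + 1 - (l + 1) = 0 := by omega
  rw [e3, e4, e5]
  have h21 : q ^ 2 - 1 ≠ 0 := sub_ne_zero.mpr hq2
  have hqq : q * q⁻¹ = 1 := mul_inv_cancel₀ hq
  have hx : ∀ s : ℕ, q ^ s * qInt q s = q * (q ^ s * q ^ s - 1) / (q ^ 2 - 1) := by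
    intro s
    have hqs : q ^ s * q⁻¹ ^ s = 1 := by rw [← mul_pow, hqq, one_pow]
    rw [qInt, mul_div_assoc', div_eq_div_iff hD h21]
    linear_combination (1 - q ^ 2) * hqs + (q ^ s * q ^ s - 1) * hqq
  have key : (1 - q ^ 2) * (q ^ (l + 1) * qInt q (l + 1))
      + (q ^ (l + 1 + 1) * qInt q (l + 1 + 1))
      = (q ^ (l + 1) * qInt q (l + 1)) + q := by
    rw [hx, hx]
    field_simp
    ring
  norm_num [cCoeff]
  linear_combination key

/-- For `q ≠ 0` with `q² ≠ 1` and integers `0 ≤ i ≤ l`, one has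
`x_{i,l} = q^{i+1}[i+1] + q(l − i)`. -/
theorem xCoeff_closed_formula (q : ℂ) (hq : q ≠ 0) (hq2 : q ^ 2 ≠ 1)
    (i l : ℕ) (hil : i ≤ l) :
    xCoeff q i l = q ^ (i + 1) * qInt q (i + 1) + q * ((l : ℂ) - (i : ℂ)) := by
  induction l, hil using Nat.le_induction with
  | base => simp [xCoeff, cCoeff]
  | succ l hil ih =>
      rw [xCoeff_step q hq hq2 i l hil, ih]
      push_cast
      ring
end

section
/- Let q be a nonzero complex number with q² ≠ 1. For all integers 0 ≤ j < k and 1 ≤ a < b, one has −x_{k,b+k−1} + x_{k,a+k−1} + x_{j,b+j−1} − x_{j,a+j−1} = 0, where x_{i,l} := ∑_{s=i+1}^{l+1} c_{l+1−s} q^s [s]. -/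
lemma qpow_qInt (q : ℂ) (hq : q ≠ 0) (n : ℕ) :
    q ^ n * qInt q n = (q ^ (2 * n) - 1) / (q - q⁻¹) := by
  unfold qInt
  rw [mul_div_assoc']
  congr 1
  rw [inv_pow, mul_sub, mul_inv_cancel₀ (pow_ne_zero n hq), ← pow_add, two_mul]

lemma xCoeff_split (q : ℂ) (i l : ℕ) (h : i ≤ l) :
    xCoeff q i l =
      (∑ s ∈ Finset.Icc (i + 1) l, (1 - q ^ 2) * (q ^ s * qInt q s))
        + q ^ (l + 1) * qInt q (l + 1) := by
  unfold xCoeff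
  rw [Finset.sum_Icc_succ_top (by omega : i + 1 ≤ l + 1)]
  congr 1
  · refine Finset.sum_congr rfl fun s hs => ?_
    simp only [Finset.mem_Icc] at hs
    rw [cCoeff, if_neg (by omega)]
    ring
  · rw [cCoeff, if_pos (by omega)]
    ring

lemma xCoeff_closed (q : ℂ) (hq : q ≠ 0) (hq2 : q ^ 2 ≠ 1) (i m : ℕ) :
    xCoeff q i (i + m) = (q ^ (2 * i + 2) - 1 - m * (1 - q ^ 2)) / (q - q⁻¹) := by
  induction m with
  | zero =>
    rw [Nat.add_zero, xCoeff_split q i i le_rfl]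
    simp only [qpow_qInt q hq, Nat.cast_zero, zero_mul, sub_zero,
      show 2 * (i + 1) = 2 * i + 2 from by ring,
      Finset.Icc_eq_empty_of_lt (Nat.lt_succ_self i), Finset.sum_empty, zero_add]
  | succ m ih =>
    have h1 : xCoeff q i (i + (m + 1)) =
        xCoeff q i (i + m) + q ^ (i + m + 2) * qInt q (i + m + 2)
          - q ^ 2 * (q ^ (i + m + 1) * qInt q (i + m + 1)) := by
      rw [xCoeff_split q i (i + m) (Nat.le_add_right i m),
        xCoeff_split q i (i + (m + 1)) (Nat.le_add_right i (m+1))]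
      have : i + (m + 1) = (i + m) + 1 := by omega
      rw [this, Finset.sum_Icc_succ_top (by omega : i + 1 ≤ i + m + 1)]
      ring_nf
    rw [h1, ih, qpow_qInt q hq, qpow_qInt q hq]
    have hd : q - q⁻¹ ≠ 0 := by
      intro h
      apply hq2
      have : q * q - 1 = (q - q⁻¹) * q := by field_simp
      rw [h, zero_mul, sub_eq_zero] at this
      rw [pow_two, this]
    push_cast
    field_simp
    ring

/-- For `q ≠ 0` with `q² ≠ 1` and integers `0 ≤ j < k`, `1 ≤ a < b`, the four-term
cancellation `−x_{k,b+k−1} + x_{k,a+k−1} + x_{j,b+j−1} − x_{j,a+j−1} = 0` holds. -/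
theorem xCoeff_four_term_cancellation (q : ℂ) (hq : q ≠ 0) (hq2 : q ^ 2 ≠ 1)
    (j k a b : ℕ) (hjk : j < k) (ha : 1 ≤ a) (hab : a < b) :
    - xCoeff q k (b + k - 1) + xCoeff q k (a + k - 1)
      + xCoeff q j (b + j - 1) - xCoeff q j (a + j - 1) = 0 := by
  have e1 : b + k - 1 = k + (b - 1) := by omega
  have e2 : a + k - 1 = k + (a - 1) := by omega
  have e3 : b + j - 1 = j + (b - 1) := by omega
  have e4 : a + j - 1 = j + (a - 1) := by omega
  rw [e1, e2, e3, e4, xCoeff_closed q hq hq2, xCoeff_closed q hq hq2,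
    xCoeff_closed q hq hq2, xCoeff_closed q hq hq2]
  ring
end

section
/- Let q be a nonzero complex number with q² ≠ 1, let A be an associative unital ℂ-algebra, and let (h_s)_{s≥1} and (F_m)_{m≥0} be families of elements of A satisfying h_s F_m − F_m h_s = −(q^s[s]/s)·F_{m+s} for all s ≥ 1 and m ≥ 0. Set H(z) := (q−q^{−1}) ∑_{s≥1} h_s z^s ∈ A[[z]]. Then for every n ≥ 0, the identity exp(H(z)) · F_n · exp(−H(z)) = F_n + (1−q²) ∑_{m≥1} F_{n+m} z^m holds in A[[z]]. -/
/-- The formal exponential of a power series with coefficients in a `ℂ`-algebra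
(intended for series with zero constant coefficient): `exp f = ∑_{k≥0} (1/k!) • f^k`. -/
noncomputable def formalExp (A : Type*) [Ring A] [Algebra ℂ A] (f : PowerSeries A) :
    PowerSeries A :=
  PowerSeries.mk fun n =>
    ∑ k ∈ Finset.range (n + 1), ((k.factorial : ℂ)⁻¹) • (PowerSeries.coeff n (f ^ k))

/-!
Put `G m = F (n + m)` and, for `g ∈ ℂ⟦z⟧`, let `hadamard g G = ∑ gₘ G m zᵐ`. The defining
relation says exactly that `[H, hadamard g G] = hadamard (ψ g) G` with
`ψ = log ((1 - q² z) / (1 - z))`. Expanding `H ^ k F_n` in powers of `ad H` therefore gives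
`exp H · F_n = hadamard (exp ψ) G · exp H`, and multiplying by `exp (-H) = (exp H)⁻¹` leaves
`hadamard (exp ψ) G`. Finally `exp ψ = (1 - q² z) / (1 - z)` because both sides solve
`E' = ψ' E` with `E(0) = 1`. All exponential series converge `z`-adically (for the discrete
topology on `A`), so their products are computed by Cauchy's product formula.
-/

open Finset
open scoped Nat

theorem pow_mul_eq_sum_choose {R : Type*} [Ring R] (u : R) {a : ℕ → R}
    (ha : ∀ j, u * a j - a j * u = a (j + 1)) (k : ℕ) :
    u ^ k * a 0 = ∑ j ∈ range (k + 1), k.choose j • (a j * u ^ (k - j)) := by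
  -- left multiplication by `u` is `ad u` plus right multiplication by `u`, and the two commute
  set D := LinearMap.mulLeft ℤ u - LinearMap.mulRight ℤ u
  have hD : ∀ j, (D ^ j) (a 0) = a j := by
    intro j
    induction j with
    | zero => rfl
    | succ j ih => rw [pow_succ', Module.End.mul_apply, ih, ← ha j]; rfl
  have hDR : Commute D (LinearMap.mulRight ℤ u) :=
    (LinearMap.commute_mulLeft_right u u).sub_left (Commute.refl _)
  calc u ^ k * a 0 = ((D + LinearMap.mulRight ℤ u) ^ k) (a 0) := by
        rw [sub_add_cancel, LinearMap.pow_mulLeft, LinearMap.mulLeft_apply]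
    _ = ∑ j ∈ range (k + 1), k.choose j • (a j * u ^ (k - j)) := by
        rw [hDR.add_pow, LinearMap.sum_apply]
        refine sum_congr rfl fun j _ => ?_
        rw [(hDR.pow_pow j (k - j)).eq, Module.End.mul_apply, Module.End.natCast_apply,
          map_nsmul, Module.End.mul_apply, hD, LinearMap.pow_mulRight, LinearMap.mulRight_apply]

theorem inv_factorial_mul_inv_factorial {n k : ℕ} (hk : k ≤ n) :
    (k ! : ℂ)⁻¹ * ((n - k)! : ℂ)⁻¹ = (n ! : ℂ)⁻¹ * n.choose k := by
  have := Nat.factorial_ne_zero n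
  rw [Nat.cast_choose ℂ hk]
  field_simp

namespace PowerSeries

open WithPiTopology

section XAdic

variable {R : Type*} [Semiring R]

theorem X_pow_add_dvd_mul {P Q : R⟦X⟧} {j m : ℕ} (hP : X ^ j ∣ P) (hQ : X ^ m ∣ Q) :
    X ^ (j + m) ∣ P * Q := by
  obtain ⟨P', rfl⟩ := hP
  obtain ⟨Q', rfl⟩ := hQ
  refine ⟨P' * Q', ?_⟩
  rw [mul_assoc, ← mul_assoc P', ← X_pow_mul, pow_add]
  simp only [mul_assoc]

theorem X_pow_dvd_pow {f : R⟦X⟧} (hf : constantCoeff f = 0) (k : ℕ) : X ^ k ∣ f ^ k := by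
  induction k with
  | zero => simp
  | succ k ih =>
    rw [pow_succ f]
    exact X_pow_add_dvd_mul ih (by rwa [pow_one, X_dvd_iff])

theorem summable_mul_prod_of_X_pow_dvd [TopologicalSpace R] {P Q : ℕ → R⟦X⟧}
    (hP : ∀ k, X ^ k ∣ P k) (hQ : ∀ k, X ^ k ∣ Q k) :
    Summable fun x : ℕ × ℕ => P x.1 * Q x.2 := by
  rw [summable_iff_summable_coeff]
  intro N
  refine summable_of_ne_finset_zero (s := range (N + 1) ×ˢ range (N + 1)) ?_
  rintro ⟨j, m⟩ hjm
  rw [mem_product, mem_range, mem_range] at hjm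
  exact X_pow_dvd_iff.mp (X_pow_add_dvd_mul (hP j) (hQ m)) N (by omega)

end XAdic

section ExpSum

variable {R : Type*} [Ring R] [Algebra ℂ R]

/-- The sum `∑ₖ P k / k!`, which converges `X`-adically when `X ^ k ∣ P k`. -/
noncomputable def expSum (P : ℕ → R⟦X⟧) : R⟦X⟧ :=
  mk fun N => ∑ k ∈ range (N + 1), (k ! : ℂ)⁻¹ • coeff N (P k)

theorem coeff_expSum (P : ℕ → R⟦X⟧) (N : ℕ) :
    coeff N (expSum P) = ∑ k ∈ range (N + 1), (k ! : ℂ)⁻¹ • coeff N (P k) :=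
  coeff_mk _ _

theorem formalExp_eq_expSum (f : R⟦X⟧) : formalExp R f = expSum (f ^ ·) := rfl

theorem X_pow_dvd_smul {P : R⟦X⟧} {k : ℕ} (hP : X ^ k ∣ P) (c : ℂ) : X ^ k ∣ c • P := by
  obtain ⟨P', rfl⟩ := hP
  exact ⟨c • P', (mul_smul_comm c _ _).symm⟩

theorem hasSum_expSum [TopologicalSpace R] {P : ℕ → R⟦X⟧} (hP : ∀ k, X ^ k ∣ P k) :
    HasSum (fun k => (k ! : ℂ)⁻¹ • P k) (expSum P) := by
  rw [hasSum_iff_hasSum_coeff]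
  intro N
  simp only [coeff_expSum, coeff_smul]
  refine hasSum_sum_of_ne_finset_zero fun k hk => ?_
  rw [mem_range, not_lt] at hk
  rw [X_pow_dvd_iff.mp (hP k) N (by omega), smul_zero]

theorem expSum_mul_expSum {P Q : ℕ → R⟦X⟧} (hP : ∀ k, X ^ k ∣ P k) (hQ : ∀ k, X ^ k ∣ Q k) :
    expSum P * expSum Q
      = expSum fun n => ∑ k ∈ range (n + 1), n.choose k • (P k * Q (n - k)) := by
  let _ : TopologicalSpace R := ⊥
  have : DiscreteTopology R := ⟨rfl⟩
  have hPQ : ∀ n, X ^ n ∣ ∑ k ∈ range (n + 1), n.choose k • (P k * Q (n - k)) := by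
    refine fun n => dvd_sum fun k hk => ?_
    rw [nsmul_eq_mul']
    refine Dvd.dvd.mul_right ?_ _
    convert X_pow_add_dvd_mul (hP k) (hQ (n - k)) using 2
    rw [mem_range] at hk
    omega
  have sumP := hasSum_expSum hP
  have sumQ := hasSum_expSum hQ
  have summable_prod := summable_mul_prod_of_X_pow_dvd
      (fun k => X_pow_dvd_smul (hP k) (k ! : ℂ)⁻¹) (fun k => X_pow_dvd_smul (hQ k) (k ! : ℂ)⁻¹)
  have cauchy := sumP.summable.tsum_mul_tsum_eq_tsum_sum_range sumQ.summable summable_prod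
  rw [sumP.tsum_eq, sumQ.tsum_eq] at cauchy
  rw [cauchy, ← (hasSum_expSum hPQ).tsum_eq]
  refine tsum_congr fun n => ?_
  rw [smul_sum]
  refine sum_congr rfl fun k hk => ?_
  rw [smul_mul_smul_comm, inv_factorial_mul_inv_factorial (by simpa [Nat.lt_succ_iff] using hk),
    mul_smul, Nat.cast_smul_eq_nsmul]

theorem expSum_mul_C (P : ℕ → R⟦X⟧) (a : R) : expSum P * C a = expSum fun k => P k * C a := by
  ext N
  simp only [coeff_mul_C, coeff_expSum, sum_mul, smul_mul_assoc]

theorem formalExp_zero : formalExp R 0 = 1 := by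
  ext N
  rw [formalExp_eq_expSum, coeff_expSum, sum_eq_single 0]
  · simp
  · intro k _ hk
    rw [zero_pow hk, map_zero, smul_zero]
  · simp

theorem formalExp_mul_formalExp {f g : R⟦X⟧} (hfg : Commute f g) (hf : constantCoeff f = 0)
    (hg : constantCoeff g = 0) : formalExp R f * formalExp R g = formalExp R (f + g) := by
  rw [formalExp_eq_expSum, formalExp_eq_expSum, formalExp_eq_expSum,
    expSum_mul_expSum (X_pow_dvd_pow hf) (X_pow_dvd_pow hg)]
  congr 1
  funext n
  rw [hfg.add_pow]
  exact sum_congr rfl fun k _ => nsmul_eq_mul' _ _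

theorem formalExp_mul_formalExp_neg {f : R⟦X⟧} (hf : constantCoeff f = 0) :
    formalExp R f * formalExp R (-f) = 1 := by
  rw [formalExp_mul_formalExp (Commute.refl f).neg_right hf (by rw [map_neg, hf, neg_zero]),
    add_neg_cancel, formalExp_zero]

end ExpSum

section Hadamard

variable {A : Type*} [Ring A] [Algebra ℂ A]

noncomputable def hadamard (g : ℂ⟦X⟧) (G : ℕ → A) : A⟦X⟧ :=
  mk fun m => coeff m g • G m

theorem coeff_hadamard (g : ℂ⟦X⟧) (G : ℕ → A) (m : ℕ) :
    coeff m (hadamard g G) = coeff m g • G m :=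
  coeff_mk _ _

theorem hadamard_one (G : ℕ → A) : hadamard 1 G = C (G 0) := by
  ext m
  rw [coeff_hadamard, coeff_one, coeff_C]
  split_ifs with hm <;> simp [hm]

theorem X_pow_dvd_hadamard {g : ℂ⟦X⟧} {k : ℕ} (hg : X ^ k ∣ g) (G : ℕ → A) :
    X ^ k ∣ hadamard g G :=
  X_pow_dvd_iff.mpr fun m hm => by rw [coeff_hadamard, X_pow_dvd_iff.mp hg m hm, zero_smul]

theorem hadamard_expSum (P : ℕ → ℂ⟦X⟧) (G : ℕ → A) :
    hadamard (expSum P) G = expSum fun k => hadamard (P k) G := by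
  ext N
  simp only [coeff_hadamard, coeff_expSum, sum_smul, smul_assoc]

theorem mul_hadamard_sub_hadamard_mul {H : A⟦X⟧} {ψ : ℂ⟦X⟧} {G : ℕ → A}
    (hHG : ∀ s m, coeff s H * G m - G m * coeff s H = coeff s ψ • G (m + s)) (g : ℂ⟦X⟧) :
    H * hadamard g G - hadamard g G * H = hadamard (ψ * g) G := by
  ext N
  rw [map_sub, coeff_mul, coeff_mul,
    ← Nat.sum_antidiagonal_swap (f := fun p => coeff p.1 (hadamard g G) * coeff p.2 H),
    coeff_hadamard, coeff_mul, sum_smul, ← sum_sub_distrib]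
  refine sum_congr rfl fun ⟨s, m⟩ hsm => ?_
  rw [HasAntidiagonal.mem_antidiagonal] at hsm
  dsimp only [Prod.swap_prod_mk]
  rw [coeff_hadamard, mul_smul_comm, smul_mul_assoc, ← smul_sub, hHG, smul_smul, mul_comm, ← hsm,
    add_comm]

theorem formalExp_mul_C_mul_formalExp_neg {H : A⟦X⟧} {ψ : ℂ⟦X⟧} {G : ℕ → A}
    (hH : constantCoeff H = 0) (hψ : constantCoeff ψ = 0)
    (hHG : ∀ s m, coeff s H * G m - G m * coeff s H = coeff s ψ • G (m + s)) :
    formalExp A H * C (G 0) * formalExp A (-H) = hadamard (formalExp ℂ ψ) G := by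
  have expand : ∀ k, H ^ k * C (G 0)
      = ∑ j ∈ range (k + 1), k.choose j • (hadamard (ψ ^ j) G * H ^ (k - j)) := by
    intro k
    rw [← hadamard_one, ← pow_zero ψ]
    exact pow_mul_eq_sum_choose H (a := fun j => hadamard (ψ ^ j) G)
      (fun j => by rw [mul_hadamard_sub_hadamard_mul hHG, pow_succ']) k
  have exp_mul_C : formalExp A H * C (G 0) = hadamard (formalExp ℂ ψ) G * formalExp A H := by
    rw [formalExp_eq_expSum, formalExp_eq_expSum, expSum_mul_C,
      hadamard_expSum, expSum_mul_expSum (fun j => X_pow_dvd_hadamard (X_pow_dvd_pow hψ j) G)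
        (X_pow_dvd_pow hH)]
    simp only [expand]
  rw [exp_mul_C, mul_assoc, formalExp_mul_formalExp_neg hH, mul_one]

end Hadamard

theorem constantCoeff_formalExp {R : Type*} [Ring R] [Algebra ℂ R] (f : R⟦X⟧) :
    constantCoeff (formalExp R f) = 1 := by
  rw [← coeff_zero_eq_constantCoeff_apply, formalExp_eq_expSum, coeff_expSum]
  simp

theorem derivative_formalExp {ψ : ℂ⟦X⟧} (hψ : constantCoeff ψ = 0) :
    d⁄dX ℂ (formalExp ℂ ψ) = d⁄dX ℂ ψ * formalExp ℂ ψ := by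
  have hE := hasSum_expSum (X_pow_dvd_pow hψ)
  rw [← formalExp_eq_expSum] at hE
  have hdE : HasSum (fun k => d⁄dX ℂ ((k ! : ℂ)⁻¹ • ψ ^ k)) (d⁄dX ℂ (formalExp ℂ ψ)) := by
    rw [hasSum_iff_hasSum_coeff] at hE ⊢
    intro N
    simp only [coeff_derivative]
    exact (hE (N + 1)).mul_right _
  have hterm : ∀ k,
      d⁄dX ℂ (((k + 1) ! : ℂ)⁻¹ • ψ ^ (k + 1)) = d⁄dX ℂ ψ * ((k ! : ℂ)⁻¹ • ψ ^ k) := by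
    intro k
    rw [Derivation.map_smul, Derivation.leibniz_pow, Nat.add_sub_cancel, smul_eq_mul,
      ← Nat.cast_smul_eq_nsmul ℂ, smul_smul, mul_comm (ψ ^ k), mul_smul_comm]
    congr 1
    rw [Nat.factorial_succ]
    push_cast
    field_simp
  have hshift := (hasSum_nat_add_iff' 1).mpr hdE
  simp only [hterm, sum_range_one, pow_zero, Derivation.map_smul, Derivation.map_one_eq_zero,
    smul_zero, sub_zero] at hshift
  exact hshift.unique (hE.mul_left _)

theorem eq_of_derivative_eq_mul {K : Type*} [Field K] [CharZero K] {ψ E G : K⟦X⟧}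
    (hE : d⁄dX K E = ψ * E) (hG : d⁄dX K G = ψ * G) (h0 : constantCoeff E = constantCoeff G) :
    E = G := by
  ext m
  induction m using Nat.strong_induction_on with
  | _ m ih =>
    cases m with
    | zero => simpa using h0
    | succ m =>
      have hm : coeff m (d⁄dX K E) = coeff m (d⁄dX K G) := by
        rw [hE, hG, coeff_mul, coeff_mul]
        refine sum_congr rfl fun p hp => ?_
        rw [ih p.2 (by have := HasAntidiagonal.mem_antidiagonal.mp hp; omega)]
      rw [coeff_derivative, coeff_derivative] at hm
      exact mul_right_cancel₀ (Nat.cast_add_one_ne_zero m) hm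

/-- The series `log ((1 - r X) / (1 - X))`. -/
noncomputable def logRatioSeries (r : ℂ) : ℂ⟦X⟧ :=
  mk fun s => if s = 0 then 0 else (1 - r ^ s) / s

/-- The series `(1 - r X) / (1 - X)`. -/
noncomputable def ratioSeries (r : ℂ) : ℂ⟦X⟧ :=
  mk fun m => if m = 0 then 1 else 1 - r

theorem constantCoeff_logRatioSeries (r : ℂ) : constantCoeff (logRatioSeries r) = 0 := by
  simp [logRatioSeries, ← coeff_zero_eq_constantCoeff_apply]

theorem coeff_derivative_logRatioSeries (r : ℂ) (i : ℕ) :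
    coeff i (d⁄dX ℂ (logRatioSeries r)) = 1 - r ^ (i + 1) := by
  rw [coeff_derivative, logRatioSeries, coeff_mk, if_neg i.succ_ne_zero, Nat.cast_succ,
    div_mul_cancel₀ _ (Nat.cast_add_one_ne_zero i)]

theorem derivative_ratioSeries (r : ℂ) :
    d⁄dX ℂ (ratioSeries r) = d⁄dX ℂ (logRatioSeries r) * ratioSeries r := by
  ext m
  rw [coeff_derivative, coeff_mul, Nat.sum_antidiagonal_eq_sum_range_succ_mk, sum_range_succ]
  simp only [coeff_derivative_logRatioSeries, ratioSeries, coeff_mk, Nat.sub_self, if_true,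
    if_neg m.succ_ne_zero]
  rw [sum_congr rfl fun i hi => by rw [if_neg (by rw [mem_range] at hi; omega)], ← sum_mul,
    sum_sub_distrib, sum_const, card_range, nsmul_one]
  simp only [pow_succ, ← sum_mul]
  linear_combination r * mul_neg_geom_sum r m

theorem formalExp_logRatioSeries (r : ℂ) : formalExp ℂ (logRatioSeries r) = ratioSeries r :=
  eq_of_derivative_eq_mul (derivative_formalExp (constantCoeff_logRatioSeries r))
    (derivative_ratioSeries r) (by
      rw [constantCoeff_formalExp, ← coeff_zero_eq_constantCoeff_apply, ratioSeries, coeff_mk,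
        if_pos rfl])

end PowerSeries

open PowerSeries

theorem qInt_mul_sub_inv (q : ℂ) (s : ℕ) : qInt q s * (q - q⁻¹) = q ^ s - q⁻¹ ^ s := by
  rcases eq_or_ne (q - q⁻¹) 0 with h | h
  · rw [h, mul_zero, ← sub_eq_zero.mp h, sub_self]
  · exact div_mul_cancel₀ _ h

theorem sub_inv_mul_qInt {q : ℂ} (hq : q ≠ 0) (s : ℕ) :
    (q - q⁻¹) * (-(q ^ s * qInt q s / s)) = (1 - (q ^ 2) ^ s) / s := by
  have hinv : q ^ s * q⁻¹ ^ s = 1 := by rw [← mul_pow, mul_inv_cancel₀ hq, one_pow]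
  linear_combination (-q ^ s / s) * qInt_mul_sub_inv q s + hinv / s

theorem conjugation_by_expH_general (q : ℂ) (hq : q ≠ 0)
    (A : Type*) [Ring A] [Algebra ℂ A] (h F : ℕ → A)
    (hrel : ∀ s m : ℕ, 1 ≤ s →
      h s * F m - F m * h s = (-(q ^ s * qInt q s / (s : ℂ))) • F (m + s))
    (n : ℕ) :
    formalExp A (PowerSeries.mk fun s => if s = 0 then 0 else (q - q⁻¹) • h s)
        * PowerSeries.C (F n)
        * formalExp A (- PowerSeries.mk fun s => if s = 0 then 0 else (q - q⁻¹) • h s)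
      = PowerSeries.mk fun m => if m = 0 then F n else (1 - q ^ 2) • F (n + m) := by
  set H : A⟦X⟧ := mk fun s => if s = 0 then 0 else (q - q⁻¹) • h s
  have hH : constantCoeff H = 0 := by simp [H, ← coeff_zero_eq_constantCoeff_apply]
  have hHF : ∀ s m, coeff s H * F (n + m) - F (n + m) * coeff s H
      = coeff s (logRatioSeries (q ^ 2)) • F (n + (m + s)) := by
    intro s m
    rcases eq_or_ne s 0 with rfl | hs
    · simp [H, logRatioSeries]
    · simp only [H, logRatioSeries, coeff_mk, if_neg hs]
      rw [smul_mul_assoc, mul_smul_comm, ← smul_sub, hrel s _ (by omega), smul_smul,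
        sub_inv_mul_qInt hq, add_assoc]
  have conj := formalExp_mul_C_mul_formalExp_neg (G := fun m => F (n + m)) hH
    (constantCoeff_logRatioSeries _) hHF
  rw [add_zero, formalExp_logRatioSeries] at conj
  rw [conj]
  ext m
  rw [coeff_hadamard, coeff_mk, ratioSeries, coeff_mk]
  split_ifs with hm <;> simp [hm]

/-- Let `q ≠ 0` with `q² ≠ 1`, `A` an associative unital `ℂ`-algebra, and
`(h_s)_{s≥1}`, `(F_m)_{m≥0}` families in `A` with
`h_s F_m − F_m h_s = −(q^s[s]/s) • F_{m+s}` for `s ≥ 1`, `m ≥ 0`.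
With `H(z) = (q−q⁻¹) ∑_{s≥1} h_s z^s`, for every `n ≥ 0` one has
`exp(H(z)) · F_n · exp(−H(z)) = F_n + (1−q²) ∑_{m≥1} F_{n+m} z^m` in `A[[z]]`. -/
theorem conjugation_by_expH (q : ℂ) (hq : q ≠ 0) (hq2 : q ^ 2 ≠ 1)
    (A : Type*) [Ring A] [Algebra ℂ A] (h F : ℕ → A)
    (hrel : ∀ s m : ℕ, 1 ≤ s →
      h s * F m - F m * h s = (-(q ^ s * qInt q s / (s : ℂ))) • F (m + s))
    (n : ℕ) :
    formalExp A (PowerSeries.mk fun s => if s = 0 then 0 else (q - q⁻¹) • h s)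
        * PowerSeries.C (F n)
        * formalExp A (- PowerSeries.mk fun s => if s = 0 then 0 else (q - q⁻¹) • h s)
      = PowerSeries.mk fun m => if m = 0 then F n else (1 - q ^ 2) • F (n + m) :=
  conjugation_by_expH_general q hq A h F hrel n
end

section
/- Let q be a nonzero complex number with q² ≠ 1, let A be an associative unital ℂ-algebra, and let (h_s)_{s≥1} and (E_n)_{n≥0} be families of elements of A satisfying h_s E_n − E_n h_s = (q^s[s]/s)·E_{n+s} for all s ≥ 1 and n ≥ 0. Set H(z) := (q−q^{−1}) ∑_{s≥1} h_s z^s and E⁺(z) := ∑_{n≥0} E_n z^n in A[[z]]. Then H′(z)·E⁺(z) − E⁺(z)·H′(z) + (E⁺)′(z) = ∑_{a≥0} q^{a+2}[a+1]·E_{a+1} z^a in A[[z]], where ′ denotes the formal derivative with respect to z. -/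
/-- The formal derivative of a power series over a (possibly noncommutative) ring. -/
noncomputable def psDeriv {A : Type*} [Ring A] (f : PowerSeries A) : PowerSeries A :=
  PowerSeries.mk fun n => (n + 1) • PowerSeries.coeff (n + 1) f

open Finset PowerSeries

lemma sub_inv_ne_zero_of_sq_ne_one {q : ℂ} (hq : q ≠ 0) (hq2 : q ^ 2 ≠ 1) : q - q⁻¹ ≠ 0 := by
  rw [sub_ne_zero]
  intro h
  apply hq2
  field_simp at h
  exact h

lemma sub_inv_mul_pow_mul_qInt {q : ℂ} (hq : q ≠ 0) (hqq : q - q⁻¹ ≠ 0) (s : ℕ) :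
    (q - q⁻¹) * (q ^ s * qInt q s) = q ^ (2 * s) - 1 := by
  rw [qInt, mul_div_assoc', mul_div_assoc', mul_div_cancel_left₀ _ hqq, inv_pow, mul_sub,
    mul_inv_cancel₀ (pow_ne_zero _ hq), pow_mul']
  ring

lemma pow_succ_mul_qInt {q : ℂ} (hq : q ≠ 0) (hqq : q - q⁻¹ ≠ 0) (n : ℕ) :
    q ^ (n + 1) * qInt q n = ∑ k ∈ range n, q ^ (2 * (k + 1)) := by
  apply mul_left_cancel₀ hqq
  have hsum : ∑ k ∈ range n, q ^ (2 * (k + 1)) = q ^ 2 * ∑ k ∈ range n, (q ^ 2) ^ k := by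
    rw [mul_sum]
    exact sum_congr rfl fun k _ => by ring
  calc (q - q⁻¹) * (q ^ (n + 1) * qInt q n) = q * ((q - q⁻¹) * (q ^ n * qInt q n)) := by ring
    _ = q * ((∑ k ∈ range n, (q ^ 2) ^ k) * (q ^ 2 - 1)) := by
      rw [sub_inv_mul_pow_mul_qInt hq hqq, geom_sum_mul, pow_mul]
    _ = (q - q⁻¹) * ∑ k ∈ range n, q ^ (2 * (k + 1)) := by
      rw [hsum]
      field_simp

lemma coeff_psDeriv {A : Type*} [Ring A] (f : PowerSeries A) (n : ℕ) :
    coeff n (psDeriv f) = (n + 1) • coeff (n + 1) f :=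
  coeff_mk _ _

lemma coeff_mul_sub_mul_eq_sum_smul {R A : Type*} [Semiring R] [Ring A] [Module R A]
    {f g : PowerSeries A} {c : ℕ → R} {e : ℕ → A}
    (hfg : ∀ i j, coeff i f * coeff j g - coeff j g * coeff i f = c i • e (i + j)) (n : ℕ) :
    coeff n (f * g - g * f) = (∑ i ∈ range (n + 1), c i) • e n := by
  rw [map_sub, coeff_mul, coeff_mul, ← Nat.sum_antidiagonal_swap (f := fun p => coeff p.1 g * _),
    ← sum_sub_distrib, sum_smul, ← Nat.sum_antidiagonal_eq_sum_range_succ fun i _ => c i • e n]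
  refine sum_congr rfl fun p hp => ?_
  rw [Prod.fst_swap, Prod.snd_swap, hfg, mem_antidiagonal.mp hp]

lemma coeff_deriv_mul_sub_mul {q : ℂ} (hq : q ≠ 0) (hqq : q - q⁻¹ ≠ 0) {A : Type*} [Ring A]
    [Algebra ℂ A] {h E : ℕ → A}
    (hrel : ∀ s n : ℕ, 1 ≤ s →
      h s * E n - E n * h s = (q ^ s * qInt q s / (s : ℂ)) • E (n + s)) (i j : ℕ) :
    coeff i (psDeriv (PowerSeries.mk fun s => if s = 0 then 0 else (q - q⁻¹) • h s))
          * coeff j (PowerSeries.mk E)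
        - coeff j (PowerSeries.mk E)
          * coeff i (psDeriv (PowerSeries.mk fun s => if s = 0 then 0 else (q - q⁻¹) • h s))
      = (q ^ (2 * (i + 1)) - 1) • E (i + j + 1) := by
  rw [coeff_psDeriv, coeff_mk, coeff_mk, if_neg i.succ_ne_zero, ← Nat.cast_smul_eq_nsmul ℂ,
    smul_smul, smul_mul_assoc, mul_smul_comm, ← smul_sub, hrel (i + 1) j i.succ_pos, smul_smul,
    show j + (i + 1) = i + j + 1 by omega, ← sub_inv_mul_pow_mul_qInt hq hqq]
  congr 1
  have hi : ((i + 1 : ℕ) : ℂ) ≠ 0 := Nat.cast_ne_zero.mpr i.succ_ne_zero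
  field_simp

/-- Let `q ≠ 0` with `q² ≠ 1`, `A` an associative unital `ℂ`-algebra, and
`(h_s)_{s≥1}`, `(E_n)_{n≥0}` families in `A` with
`h_s E_n − E_n h_s = (q^s[s]/s) • E_{n+s}` for `s ≥ 1`, `n ≥ 0`.
With `H(z) = (q−q⁻¹) ∑_{s≥1} h_s z^s` and `E⁺(z) = ∑_{n≥0} E_n z^n`, one has
`H′(z)·E⁺(z) − E⁺(z)·H′(z) + (E⁺)′(z) = ∑_{a≥0} q^{a+2}[a+1]·E_{a+1} z^a` in `A[[z]]`. -/
theorem deriv_commutator_identity (q : ℂ) (hq : q ≠ 0) (hq2 : q ^ 2 ≠ 1)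
    (A : Type*) [Ring A] [Algebra ℂ A] (h E : ℕ → A)
    (hrel : ∀ s n : ℕ, 1 ≤ s →
      h s * E n - E n * h s = (q ^ s * qInt q s / (s : ℂ)) • E (n + s)) :
    psDeriv (PowerSeries.mk fun s => if s = 0 then 0 else (q - q⁻¹) • h s)
          * (PowerSeries.mk fun n => E n)
        - (PowerSeries.mk fun n => E n)
          * psDeriv (PowerSeries.mk fun s => if s = 0 then 0 else (q - q⁻¹) • h s)
        + psDeriv (PowerSeries.mk fun n => E n)
      = PowerSeries.mk fun a => (q ^ (a + 2) * qInt q (a + 1)) • E (a + 1) := by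
  have hqq := sub_inv_ne_zero_of_sq_ne_one hq hq2
  ext a
  rw [map_add, coeff_mul_sub_mul_eq_sum_smul (e := fun m => E (m + 1))
      (coeff_deriv_mul_sub_mul hq hqq hrel), coeff_psDeriv, coeff_mk, coeff_mk,
    ← Nat.cast_smul_eq_nsmul ℂ, ← add_smul, sum_sub_distrib, sum_const, card_range, nsmul_one,
    sub_add_cancel, ← pow_succ_mul_qInt hq hqq]
end

section
/- Let q be a nonzero complex number with q² ≠ 1 and let B be an associative unital ℂ-algebra containing families of elements g_s, g′_s (s ≥ 1), e_i (i ≥ 0), f_j (j ≥ 1) satisfying: all the g_s and g′_t pairwise commute; g_s e_j − e_j g_s = (q^s[s]/s) e_{j+s}; g′_s f_j − f_j g′_s = −(q^s[s]/s) f_{j+s}; g_s f_j = f_j g_s; g′_s e_j = e_j g′_s; e_i e_j = −e_j e_i; f_i f_j = −f_j f_i; and e_i f_j = −f_j e_i, for all admissible indices. Define μ_s := (q−q^{−1})(g_s + g′_s) + (q^s[s]/s) ∑_{i=0}^{s−1} e_i f_{s−i} for s ≥ 1. Then μ_s μ_t = μ_t μ_s for all s, t ≥ 1. -/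
section Aux

variable {B : Type*} [Ring B] [Algebra ℂ B]

/-- Products `e_i f_j` pairwise commute. -/
private lemma ef_comm (e f : ℕ → B)
    (hee : ∀ i j : ℕ, e i * e j = -(e j * e i))
    (hff : ∀ i j : ℕ, 1 ≤ i → 1 ≤ j → f i * f j = -(f j * f i))
    (hef : ∀ i j : ℕ, 1 ≤ j → e i * f j = -(f j * e i))
    (i j k l : ℕ) (hj : 1 ≤ j) (hl : 1 ≤ l) :
    (e i * f j) * (e k * f l) = (e k * f l) * (e i * f j) := by
  have h1 : f j * e k = -(e k * f j) := by rw [hef k j hj, neg_neg]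
  have h2 : e i * f l = -(f l * e i) := hef i l hl
  calc (e i * f j) * (e k * f l)
      = e i * ((f j * e k) * f l) := by noncomm_ring
    _ = e i * ((-(e k * f j)) * f l) := by rw [h1]
    _ = -((e i * e k) * (f j * f l)) := by noncomm_ring
    _ = -((-(e k * e i)) * (-(f l * f j))) := by rw [hee i k, hff j l hj hl]
    _ = -(e k * ((e i * f l) * f j)) := by noncomm_ring
    _ = -(e k * ((-(f l * e i)) * f j)) := by rw [h2]
    _ = (e k * f l) * (e i * f j) := by noncomm_ring

/-- The quadratic sums pairwise commute. -/
private lemma E_comm (e f : ℕ → B)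
    (hee : ∀ i j : ℕ, e i * e j = -(e j * e i))
    (hff : ∀ i j : ℕ, 1 ≤ i → 1 ≤ j → f i * f j = -(f j * f i))
    (hef : ∀ i j : ℕ, 1 ≤ j → e i * f j = -(f j * e i))
    (s t : ℕ) :
    (∑ i ∈ Finset.range s, e i * f (s - i)) * (∑ j ∈ Finset.range t, e j * f (t - j))
      = (∑ j ∈ Finset.range t, e j * f (t - j)) * (∑ i ∈ Finset.range s, e i * f (s - i)) := by
  rw [Finset.sum_mul_sum, Finset.sum_mul_sum, Finset.sum_comm]
  refine Finset.sum_congr rfl fun j hj => Finset.sum_congr rfl fun i hi => ?_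
  have hi' := Finset.mem_range.mp hi
  have hj' := Finset.mem_range.mp hj
  exact ef_comm e f hee hff hef i (s - i) j (t - j) (by omega) (by omega)

/-- Commutation of `g_u + g'_u` with a single product `e_i f_j`. -/
private lemma gE_comm (g g' e f : ℕ → B) (c : ℕ → ℂ)
    (hge : ∀ s j : ℕ, 1 ≤ s → g s * e j - e j * g s = c s • e (j + s))
    (hg'f : ∀ s j : ℕ, 1 ≤ s → 1 ≤ j → g' s * f j - f j * g' s = (-(c s)) • f (j + s))
    (hgf : ∀ s j : ℕ, 1 ≤ s → 1 ≤ j → g s * f j = f j * g s)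
    (hg'e : ∀ s j : ℕ, 1 ≤ s → g' s * e j = e j * g' s)
    (u i j : ℕ) (hu : 1 ≤ u) (hj : 1 ≤ j) :
    (g u + g' u) * (e i * f j)
      = (e i * f j) * (g u + g' u) + c u • (e (i + u) * f j) - c u • (e i * f (j + u)) := by
  have h1 : g u * e i = c u • e (i + u) + e i * g u := by
    rw [← hge u i hu]; abel
  have h2 : g' u * f j = (-(c u)) • f (j + u) + f j * g' u := by
    rw [← hg'f u j hu hj]; abel
  calc (g u + g' u) * (e i * f j)
      = (g u * e i) * f j + (g' u * e i) * f j := by noncomm_ring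
    _ = (c u • e (i + u) + e i * g u) * f j + (e i * g' u) * f j := by
        rw [h1, hg'e u i hu]
    _ = c u • (e (i + u) * f j) + e i * (g u * f j) + e i * (g' u * f j) := by
        rw [add_mul, smul_mul_assoc, mul_assoc, mul_assoc]
    _ = c u • (e (i + u) * f j) + e i * (f j * g u)
          + e i * ((-(c u)) • f (j + u) + f j * g' u) := by
        rw [hgf u j hu hj, h2]
    _ = (e i * f j) * (g u + g' u) + c u • (e (i + u) * f j) - c u • (e i * f (j + u)) := by
        simp only [mul_add, neg_smul, mul_neg, mul_smul_comm, ← mul_assoc]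
        abel

/-- Commutation of `g_u + g'_u` with the quadratic sum, in reindexed form. -/
private lemma gE_sum (g g' e f : ℕ → B) (c : ℕ → ℂ)
    (hge : ∀ s j : ℕ, 1 ≤ s → g s * e j - e j * g s = c s • e (j + s))
    (hg'f : ∀ s j : ℕ, 1 ≤ s → 1 ≤ j → g' s * f j - f j * g' s = (-(c s)) • f (j + s))
    (hgf : ∀ s j : ℕ, 1 ≤ s → 1 ≤ j → g s * f j = f j * g s)
    (hg'e : ∀ s j : ℕ, 1 ≤ s → g' s * e j = e j * g' s)
    (u t : ℕ) (hu : 1 ≤ u) (ht : 1 ≤ t) :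
    (g u + g' u) * (∑ i ∈ Finset.range t, e i * f (t - i))
      = (∑ i ∈ Finset.range t, e i * f (t - i)) * (g u + g' u)
        + c u • ((∑ k ∈ Finset.Ico u (u + t), e k * f (u + t - k))
            - ∑ k ∈ Finset.Ico 0 t, e k * f (u + t - k)) := by
  rw [Finset.mul_sum, Finset.sum_mul]
  have hterm : ∀ i ∈ Finset.range t,
      (g u + g' u) * (e i * f (t - i))
        = (e i * f (t - i)) * (g u + g' u) + c u • (e (i + u) * f (t - i))
          - c u • (e i * f (t - i + u)) := by
    intro i hi
    have hi' := Finset.mem_range.mp hi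
    exact gE_comm g g' e f c hge hg'f hgf hg'e u i (t - i) hu (by omega)
  rw [Finset.sum_congr rfl hterm, Finset.sum_sub_distrib, Finset.sum_add_distrib,
    ← Finset.smul_sum, ← Finset.smul_sum]
  have hA : (∑ i ∈ Finset.range t, e (i + u) * f (t - i))
      = ∑ k ∈ Finset.Ico u (u + t), e k * f (u + t - k) := by
    rw [Finset.sum_Ico_eq_sum_range]
    have hn : u + t - u = t := by omega
    rw [hn]
    refine Finset.sum_congr rfl fun i hi => ?_
    have h1 : u + i = i + u := by omega
    have h2 : u + t - (i + u) = t - i := by omega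
    rw [h1, h2]
  have hB : (∑ i ∈ Finset.range t, e i * f (t - i + u))
      = ∑ k ∈ Finset.Ico 0 t, e k * f (u + t - k) := by
    rw [← Finset.range_eq_Ico]
    refine Finset.sum_congr rfl fun i hi => ?_
    have hi' := Finset.mem_range.mp hi
    have h2 : t - i + u = u + t - i := by omega
    rw [h2]
  rw [hA, hB, smul_sub]
  abel

/-- Abstract form of the claim: the `μ`-elements pairwise commute. -/
private lemma mu_comm_aux (g g' e f : ℕ → B) (a : ℂ) (c : ℕ → ℂ)
    (hgg : ∀ s t : ℕ, 1 ≤ s → 1 ≤ t → g s * g t = g t * g s)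
    (hgg' : ∀ s t : ℕ, 1 ≤ s → 1 ≤ t → g s * g' t = g' t * g s)
    (hg'g' : ∀ s t : ℕ, 1 ≤ s → 1 ≤ t → g' s * g' t = g' t * g' s)
    (hge : ∀ s j : ℕ, 1 ≤ s → g s * e j - e j * g s = c s • e (j + s))
    (hg'f : ∀ s j : ℕ, 1 ≤ s → 1 ≤ j → g' s * f j - f j * g' s = (-(c s)) • f (j + s))
    (hgf : ∀ s j : ℕ, 1 ≤ s → 1 ≤ j → g s * f j = f j * g s)
    (hg'e : ∀ s j : ℕ, 1 ≤ s → g' s * e j = e j * g' s)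
    (hee : ∀ i j : ℕ, e i * e j = -(e j * e i))
    (hff : ∀ i j : ℕ, 1 ≤ i → 1 ≤ j → f i * f j = -(f j * f i))
    (hef : ∀ i j : ℕ, 1 ≤ j → e i * f j = -(f j * e i))
    (s t : ℕ) (hs : 1 ≤ s) (ht : 1 ≤ t) :
    (a • (g s + g' s) + c s • ∑ i ∈ Finset.range s, e i * f (s - i))
        * (a • (g t + g' t) + c t • ∑ i ∈ Finset.range t, e i * f (t - i))
      = (a • (g t + g' t) + c t • ∑ i ∈ Finset.range t, e i * f (t - i))
        * (a • (g s + g' s) + c s • ∑ i ∈ Finset.range s, e i * f (s - i)) := by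
  have hsm : ∀ (x y : ℂ) (A C : B), (x • A) * (y • C) = (x * y) • (A * C) := by
    intro x y A C
    rw [smul_mul_assoc, mul_smul_comm, smul_smul]
  have hGG : (g s + g' s) * (g t + g' t) = (g t + g' t) * (g s + g' s) := by
    simp only [add_mul, mul_add]
    rw [hgg s t hs ht, hgg' s t hs ht, hg'g' s t hs ht, ← hgg' t s ht hs]
    abel
  have hEE := E_comm e f hee hff hef s t
  have hGsEt := gE_sum g g' e f c hge hg'f hgf hg'e s t hs ht
  have hGtEs := gE_sum g g' e f c hge hg'f hgf hg'e t s ht hs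
  have hts : t + s = s + t := by omega
  rw [hts] at hGtEs
  -- split sums over `Ico`
  have hsplit : ∀ u : ℕ, u ≤ s + t →
      (∑ k ∈ Finset.Ico u (s + t), e k * f (s + t - k))
        = (∑ k ∈ Finset.Ico 0 (s + t), e k * f (s + t - k))
          - ∑ k ∈ Finset.Ico 0 u, e k * f (s + t - k) := by
    intro u hu
    have := Finset.sum_Ico_consecutive (fun k => e k * f (s + t - k))
      (Nat.zero_le u) hu
    rw [← this]
    abel
  rw [hsplit s (by omega)] at hGsEt
  rw [hsplit t (by omega)] at hGtEs
  set Gs := g s + g' s with hGs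
  set Gt := g t + g' t with hGt
  set Es := ∑ i ∈ Finset.range s, e i * f (s - i) with hEs
  set Et := ∑ i ∈ Finset.range t, e i * f (t - i) with hEt
  simp only [add_mul, mul_add, hsm]
  rw [hGG, hEE, hGsEt, hGtEs]
  module

end Aux

/-- Claim 1 in the proof of the coproduct formula for the Drinfeld Cartan
generators: the elements `μ_s = (q−q⁻¹)(g_s + g′_s) + (q^s[s]/s) ∑_{i=0}^{s−1} e_i f_{s−i}`
pairwise commute. -/
theorem mu_commute (q : ℂ) (hq : q ≠ 0) (hq2 : q ^ 2 ≠ 1)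
    (B : Type*) [Ring B] [Algebra ℂ B]
    (g g' e f : ℕ → B)
    (hgg : ∀ s t : ℕ, 1 ≤ s → 1 ≤ t → g s * g t = g t * g s)
    (hgg' : ∀ s t : ℕ, 1 ≤ s → 1 ≤ t → g s * g' t = g' t * g s)
    (hg'g' : ∀ s t : ℕ, 1 ≤ s → 1 ≤ t → g' s * g' t = g' t * g' s)
    (hge : ∀ s j : ℕ, 1 ≤ s →
      g s * e j - e j * g s = (q ^ s * qInt q s / (s : ℂ)) • e (j + s))
    (hg'f : ∀ s j : ℕ, 1 ≤ s → 1 ≤ j →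
      g' s * f j - f j * g' s = (-(q ^ s * qInt q s / (s : ℂ))) • f (j + s))
    (hgf : ∀ s j : ℕ, 1 ≤ s → 1 ≤ j → g s * f j = f j * g s)
    (hg'e : ∀ s j : ℕ, 1 ≤ s → g' s * e j = e j * g' s)
    (hee : ∀ i j : ℕ, e i * e j = -(e j * e i))
    (hff : ∀ i j : ℕ, 1 ≤ i → 1 ≤ j → f i * f j = -(f j * f i))
    (hef : ∀ i j : ℕ, 1 ≤ j → e i * f j = -(f j * e i))
    (μ : ℕ → B)
    (hμ : ∀ s : ℕ, 1 ≤ s → μ s = (q - q⁻¹) • (g s + g' s)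
      + (q ^ s * qInt q s / (s : ℂ)) • ∑ i ∈ Finset.range s, e i * f (s - i))
    (s t : ℕ) (hs : 1 ≤ s) (ht : 1 ≤ t) :
    μ s * μ t = μ t * μ s := by
  rw [hμ s hs, hμ t ht]
  exact mu_comm_aux g g' e f (q - q⁻¹) (fun u => q ^ u * qInt q u / (u : ℂ))
    hgg hgg' hg'g' hge hg'f hgf hg'e hee hff hef s t hs ht
end

section
/- Let q be a nonzero complex number with q² ≠ 1 and let B be an associative unital ℂ-algebra containing families of elements e_i (i ≥ 0) and f_j (j ≥ 1) satisfying e_i e_j = −e_j e_i, f_i f_j = −f_j f_i, and e_i f_j = −f_j e_i for all admissible indices. Then in B[[z]] one has (∑_{j≥0} e_j z^j) · (∑_{a≥1} f_a z^a) · (∑_{l≥0} z^l ∑_{i=0}^{l} (q^{i+1}[i+1] + q(l−i)) e_i f_{l+1−i}) = 0. -/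
theorem mul_mul_add_mul_eq_zero {R : Type*} [Ring R] {e f φ ψ : R} (hee : e * e = 0)
    (hff : f * f = 0) (hfe : f * e = -(e * f)) (hfφ : f * φ = -(φ * f)) :
    e * f * (φ * f + e * ψ) = 0 := by
  have hφ : e * f * (φ * f) = 0 := by
    rw [mul_assoc e, ← mul_assoc f, hfφ, neg_mul, mul_assoc φ, hff]; simp
  have hψ : e * f * (e * ψ) = 0 := by
    rw [mul_assoc e, ← mul_assoc f, hfe, neg_mul, mul_neg, ← mul_assoc, ← mul_assoc, hee]; simp
  rw [mul_add, hφ, hψ, add_zero]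

namespace PowerSeries

open Finset

theorem mk_mul_mk_eq_neg {B : Type*} [Ring B] {g h : ℕ → B}
    (H : ∀ i j, g i * h j = -(h j * g i)) : mk g * mk h = -(mk h * mk g) := by
  ext n
  rw [map_neg, coeff_mul, coeff_mul,
    ← Nat.sum_antidiagonal_swap (f := fun p => coeff p.1 (mk h) * coeff p.2 (mk g))]
  simp only [Prod.fst_swap, Prod.snd_swap, coeff_mk, ← sum_neg_distrib]
  exact sum_congr rfl fun p _ => H p.1 p.2

theorem mk_mul_self_eq_zero (K : Type*) {B : Type*} [Field K] [NeZero (2 : K)] [Ring B]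
    [Module K B] {g : ℕ → B} (H : ∀ i j, g i * g j = -(g j * g i)) : mk g * mk g = 0 := by
  have htwo : (2 : K) • (mk g * mk g) = 0 := by
    rw [two_smul]
    nth_rewrite 1 [mk_mul_mk_eq_neg H]
    exact neg_add_cancel _
  exact (smul_eq_zero.mp htwo).resolve_left two_ne_zero

theorem mk_sum_smul_mul {R B : Type*} [CommSemiring R] [Semiring B] [Algebra R B]
    (a b : ℕ → R) (g h : ℕ → B) :
    mk (fun l => ∑ i ∈ range (l + 1), (a i + b (l - i)) • (g i * h (l - i)))
      = mk (fun i => a i • g i) * mk h + mk g * mk (fun j => b j • h j) := by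
  ext l
  rw [map_add, coeff_mul, coeff_mul, Nat.sum_antidiagonal_eq_sum_range_succ_mk,
    Nat.sum_antidiagonal_eq_sum_range_succ_mk, ← sum_add_distrib, coeff_mk]
  refine sum_congr rfl fun i _ => ?_
  simp only [coeff_mk, add_smul, smul_mul_assoc, mul_smul_comm]

theorem mk_eq_X_mul_mk_succ {R : Type*} [Semiring R] {g : ℕ → R} (hg : g 0 = 0) :
    mk g = X * mk fun k => g (k + 1) := by
  simpa [hg] using eq_X_mul_shift_add_const (mk g)

end PowerSeries

open PowerSeries Finset in
theorem EF_times_x_eq_zero_general (q : ℂ)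
    (B : Type*) [Ring B] [Algebra ℂ B] (e f : ℕ → B)
    (hee : ∀ i j : ℕ, e i * e j = -(e j * e i))
    (hff : ∀ i j : ℕ, 1 ≤ i → 1 ≤ j → f i * f j = -(f j * f i))
    (hef : ∀ i j : ℕ, 1 ≤ j → e i * f j = -(f j * e i)) :
    (PowerSeries.mk fun j => e j)
        * (PowerSeries.mk fun a => if a = 0 then 0 else f a)
        * (PowerSeries.mk fun l => ∑ i ∈ Finset.range (l + 1),
            (q ^ (i + 1) * qInt q (i + 1) + q * ((l : ℂ) - (i : ℂ))) • (e i * f (l + 1 - i)))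
      = 0 := by
  set E := mk fun j => e j
  set F' := mk fun k => f (k + 1)
  set Φ := mk fun i => (q ^ (i + 1) * qInt q (i + 1)) • e i
  set Ψ := mk fun k => (q * (k : ℂ)) • f (k + 1)
  have hfe : ∀ k i, f (k + 1) * e i = -(e i * f (k + 1)) := fun k i => by
    rw [hef i (k + 1) k.succ_pos, neg_neg]
  have hF : (mk fun a => if a = 0 then 0 else f a) = X * F' := mk_eq_X_mul_mk_succ rfl
  have hx : (mk fun l => ∑ i ∈ range (l + 1),
      (q ^ (i + 1) * qInt q (i + 1) + q * ((l : ℂ) - (i : ℂ))) • (e i * f (l + 1 - i)))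
      = Φ * F' + E * Ψ := by
    rw [← mk_sum_smul_mul]
    congr! 2 with l
    refine sum_congr rfl fun i hi => ?_
    have hil : i ≤ l := Nat.lt_succ_iff.mp (mem_range.mp hi)
    rw [Nat.cast_sub hil, Nat.sub_add_comm hil]
  have hEE : E * E = 0 := mk_mul_self_eq_zero ℂ hee
  have hF'F' : F' * F' = 0 := mk_mul_self_eq_zero ℂ fun i j => hff _ _ i.succ_pos j.succ_pos
  have hF'E : F' * E = -(E * F') := mk_mul_mk_eq_neg hfe
  have hF'Φ : F' * Φ = -(Φ * F') := mk_mul_mk_eq_neg fun k i => by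
    rw [mul_smul_comm, smul_mul_assoc, hfe, smul_neg]
  rw [hF, hx, ← mul_assoc, (commute_X E).eq, mul_assoc X, mul_assoc X,
    mul_mul_add_mul_eq_zero hEE hF'F' hF'E hF'Φ, mul_zero]

/-- Claim 2 in the proof of the coproduct formula `Δ(h_s)`:
`(∑_{j≥0} e_j z^j) · (∑_{a≥1} f_a z^a) ·
 (∑_{l≥0} z^l ∑_{i=0}^{l} (q^{i+1}[i+1] + q(l−i)) e_i f_{l+1−i}) = 0` in `B[[z]]`. -/
theorem EF_times_x_eq_zero (q : ℂ) (hq : q ≠ 0) (hq2 : q ^ 2 ≠ 1)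
    (B : Type*) [Ring B] [Algebra ℂ B] (e f : ℕ → B)
    (hee : ∀ i j : ℕ, e i * e j = -(e j * e i))
    (hff : ∀ i j : ℕ, 1 ≤ i → 1 ≤ j → f i * f j = -(f j * f i))
    (hef : ∀ i j : ℕ, 1 ≤ j → e i * f j = -(f j * e i)) :
    (PowerSeries.mk fun j => e j)
        * (PowerSeries.mk fun a => if a = 0 then 0 else f a)
        * (PowerSeries.mk fun l => ∑ i ∈ Finset.range (l + 1),
            (q ^ (i + 1) * qInt q (i + 1) + q * ((l : ℂ) - (i : ℂ))) • (e i * f (l + 1 - i)))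
      = 0 :=
  EF_times_x_eq_zero_general q B e f hee hff hef
end

section
/- Let q be a nonzero complex number with q² ≠ 1 and let z be a complex number with z ≠ 1 and z ≠ q². In the ring of 4×4 complex matrices, with rows and columns indexed by the ordered basis (v₁⊗v₁, v₁⊗v₂, v₂⊗v₁, v₂⊗v₂) and E_{kl} denoting the matrix unit with 1 in row k, column l, define: M_K := diag(q^{−2}, q^{−1}, q^{−1}, 1); M₋ := I − ((q−q^{−1})z/(1−z))·E_{32}; M₀ := diag((1−q²z)/(1−q^{−2}z), (1−z)/(1−q^{−2}z), (1−q²z)/(1−z), 1); M₊ := I − ((q−q^{−1})/(1−z))·E_{23}. Then M_K · M₋ · M₀ · M₊ = (q^{−1}z − q)^{−1} · N, where N := diag(qz − q^{−1}, z − 1, z − 1, q^{−1}z − q) + (q−q^{−1})·E_{23} + z(q−q^{−1})·E_{32}. -/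
/-!
Up to the diagonal factor `M_K`, the product is the Gauss (LDU) factorization of the Perk–Schultz
matrix: the unipotent factors only involve the basis vectors `v₁⊗v₂` and `v₂⊗v₁`, and
`(1 - b E₃₂) D (1 - c E₂₃) = D - d₂ c E₂₃ - b d₂ E₃₂ + b d₂ c E₃₃`. Comparing entries then leaves
identities between rational functions of `q` and `z`, whose denominators are nonzero because
`q ≠ 0`, `z ≠ 1` and `z ≠ q²`.
-/

open Matrix

namespace Matrix

variable {n R : Type*} [DecidableEq n] [Fintype n]

theorem diagonal_mul_single [Semiring R] (d : n → R) (i j : n) (c : R) :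
    diagonal d * single i j c = single i j (d i * c) := by
  ext a b
  by_cases h : i = a <;> simp [diagonal_mul, single_apply, h]

theorem single_mul_diagonal [Semiring R] (d : n → R) (i j : n) (c : R) :
    single i j c * diagonal d = single i j (c * d j) := by
  ext a b
  by_cases h : j = b <;> simp [mul_diagonal, single_apply, h]

theorem one_sub_single_mul_diagonal_mul_one_sub_single [Ring R] (i j : n) (b c : R)
    (d : n → R) :
    (1 - single j i b) * diagonal d * (1 - single i j c) =
      diagonal d - single i j (d i * c) - single j i (b * d i) + single j j (b * d i * c) := by
  simp only [sub_mul, mul_sub, one_mul, mul_one, diagonal_mul_single, single_mul_diagonal,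
    single_mul_single_same]
  abel

end Matrix

theorem universal_R_specializes_to_PerkSchultz_general (q z : ℂ) (hq : q ≠ 0)
    (hz1 : z ≠ 1) (hzq : z ≠ q ^ 2) :
    let MK : Matrix (Fin 4) (Fin 4) ℂ := Matrix.diagonal ![(q ^ 2)⁻¹, q⁻¹, q⁻¹, 1]
    let Mminus : Matrix (Fin 4) (Fin 4) ℂ :=
      1 - Matrix.single 2 1 ((q - q⁻¹) * z / (1 - z))
    let Mzero : Matrix (Fin 4) (Fin 4) ℂ :=
      Matrix.diagonal ![(1 - q ^ 2 * z) / (1 - (q ^ 2)⁻¹ * z),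
        (1 - z) / (1 - (q ^ 2)⁻¹ * z), (1 - q ^ 2 * z) / (1 - z), 1]
    let Mplus : Matrix (Fin 4) (Fin 4) ℂ :=
      1 - Matrix.single 1 2 ((q - q⁻¹) / (1 - z))
    let N : Matrix (Fin 4) (Fin 4) ℂ :=
      Matrix.diagonal ![q * z - q⁻¹, z - 1, z - 1, q⁻¹ * z - q]
        + Matrix.single 1 2 (q - q⁻¹)
        + Matrix.single 2 1 (z * (q - q⁻¹))
    MK * Mminus * Mzero * Mplus = (q⁻¹ * z - q)⁻¹ • N := by
  intro MK Mminus Mzero Mplus N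
  rw [mul_assoc MK, mul_assoc MK, one_sub_single_mul_diagonal_mul_one_sub_single]
  ext i j
  fin_cases i <;> fin_cases j <;> simp [MK, N, diagonal_mul] <;> field_simp <;> ring

/-- On the ordered basis `(v₁⊗v₁, v₁⊗v₂, v₂⊗v₁, v₂⊗v₂)` of `V⊗V`, the product of
the four factors of the specialized universal `R`-matrix of `U_q(ĝl(1,1))`
equals the Perk–Schultz `R`-matrix `R(z,1)` divided by `q⁻¹z − q`. -/
theorem universal_R_specializes_to_PerkSchultz (q z : ℂ) (hq : q ≠ 0)
    (hq2 : q ^ 2 ≠ 1) (hz1 : z ≠ 1) (hzq : z ≠ q ^ 2) :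
    let MK : Matrix (Fin 4) (Fin 4) ℂ := Matrix.diagonal ![(q ^ 2)⁻¹, q⁻¹, q⁻¹, 1]
    let Mminus : Matrix (Fin 4) (Fin 4) ℂ :=
      1 - Matrix.single 2 1 ((q - q⁻¹) * z / (1 - z))
    let Mzero : Matrix (Fin 4) (Fin 4) ℂ :=
      Matrix.diagonal ![(1 - q ^ 2 * z) / (1 - (q ^ 2)⁻¹ * z),
        (1 - z) / (1 - (q ^ 2)⁻¹ * z), (1 - q ^ 2 * z) / (1 - z), 1]
    let Mplus : Matrix (Fin 4) (Fin 4) ℂ :=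
      1 - Matrix.single 1 2 ((q - q⁻¹) / (1 - z))
    let N : Matrix (Fin 4) (Fin 4) ℂ :=
      Matrix.diagonal ![q * z - q⁻¹, z - 1, z - 1, q⁻¹ * z - q]
        + Matrix.single 1 2 (q - q⁻¹)
        + Matrix.single 2 1 (z * (q - q⁻¹))
    MK * Mminus * Mzero * Mplus = (q⁻¹ * z - q)⁻¹ • N :=
  universal_R_specializes_to_PerkSchultz_general q z hq hz1 hzq
end
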